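/- arXiv:1407.3957 — 2 statements merged into one kernel-verified Lean document; each statement's English description precedes it below -/
import Mathlib

section
/- For all real x in the interval [0,1], x - 1 + e^{-x} ≥ x²/e. -/
open Real Finset

/-! Near `x = 0` a third-order Taylor bound for `exp (-x)` suffices; near `x = 1`, where the
inequality is an equality, one expands `exp (1 - x)` around `0` instead. Only `18/7 ≤ e ≤ 11/4`
is needed. -/

lemma one_add_add_sq_div_two_add_cube_div_six_le_exp {u : ℝ} (hu : 0 ≤ u) :
    1 + u + u ^ 2 / 2 + u ^ 3 / 6 ≤ exp u := by
  have h := sum_le_exp_of_nonneg hu 4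
  norm_num [sum_range_succ, Nat.factorial] at h
  linarith

lemma one_sub_add_sq_div_two_sub_le_exp_neg {t : ℝ} (ht0 : 0 ≤ t) (ht1 : t ≤ 1) :
    1 - t + t ^ 2 / 2 - 2 * t ^ 3 / 9 ≤ exp (-t) := by
  have h := exp_bound (x := -t) (by rwa [abs_neg, abs_of_nonneg ht0]) (n := 3) (by norm_num)
  rw [abs_neg, abs_of_nonneg ht0] at h
  norm_num [sum_range_succ, Nat.factorial] at h
  linarith [(abs_sub_le_iff.1 h).2]

lemma one_sub_add_sq_div_exp_one_le_exp_neg_of_le_half {x : ℝ} (hx0 : 0 ≤ x) (hx : x ≤ 1 / 2) :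
    1 - x + x ^ 2 / exp 1 ≤ exp (-x) := by
  have he : 18 / 7 ≤ exp 1 := by linarith [exp_one_gt_d9]
  have hsq : x ^ 2 / exp 1 ≤ x ^ 2 * (7 / 18) := by
    rw [div_le_iff₀ (exp_pos 1)]
    nlinarith [sq_nonneg x]
  nlinarith [one_sub_add_sq_div_two_sub_le_exp_neg hx0 (by linarith), pow_nonneg hx0 3]

lemma one_sub_add_sq_div_exp_one_le_exp_neg_of_half_le {x : ℝ} (hx : 1 / 2 ≤ x) (hx1 : x ≤ 1) :
    1 - x + x ^ 2 / exp 1 ≤ exp (-x) := by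
  have hu0 : 0 ≤ 1 - x := by linarith
  have he : exp 1 ≤ 11 / 4 := by linarith [exp_one_lt_d9]
  have hexp : exp (-x) * exp 1 = exp (1 - x) := by rw [← exp_add]; ring_nf
  -- with `u = 1 - x`: `exp u - (1 - u) ^ 2 - e u ≥ (3 - e - u / 2) u + u ^ 3 / 6 ≥ 0`
  have key : x ^ 2 + exp 1 * (1 - x) ≤ exp (1 - x) := by
    nlinarith [one_add_add_sq_div_two_add_cube_div_six_le_exp hu0,
      mul_nonneg hu0 (by linarith : (0 : ℝ) ≤ 11 / 4 - exp 1), pow_nonneg hu0 3]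
  have hsq : x ^ 2 / exp 1 ≤ exp (-x) - (1 - x) := by
    rw [div_le_iff₀ (exp_pos 1)]
    linarith
  linarith

theorem stmt_0 (x : ℝ) (hx0 : 0 ≤ x) (hx1 : x ≤ 1) :
    x - 1 + Real.exp (-x) ≥ x ^ 2 / Real.exp 1 := by
  rcases le_total x (1 / 2) with hx | hx
  · linarith [one_sub_add_sq_div_exp_one_le_exp_neg_of_le_half hx0 hx]
  · linarith [one_sub_add_sq_div_exp_one_le_exp_neg_of_half_le hx hx1]
end

section
/- Let n be a natural number with n ≥ 2, and let L : Fin (n-1) → ℝ be a sequence with values L_t ∈ [0,1] for each t. Then ∑_{t=1}^{n-1} L_t/(n-t) ≥ ln(n / (n - ∑_{t=1}^{n-1} L_t)). -/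
/-!
Write `S_m = ∑_{t ≤ m} L_t`. Since `log y ≤ y - 1`, adding `L_t` to the partial sum raises
`log (N / (N - S))` by at most `L_t / (N - S_t)`, and `S_t ≤ t` bounds this by `L_t / (N - t)`;
summing these increments gives the inequality.
-/

open Finset

lemma Real.log_div_sub_le_div_sub {a x : ℝ} (hx : 0 ≤ x) (hxa : x < a) :
    Real.log (a / (a - x)) ≤ x / (a - x) := by
  have hpos : 0 < a - x := sub_pos.mpr hxa
  calc Real.log (a / (a - x)) ≤ a / (a - x) - 1 :=
        Real.log_le_sub_one_of_pos (div_pos (by linarith) hpos)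
    _ = x / (a - x) := by field_simp; ring

lemma sum_Icc_one_le_of_le_one {L : ℕ → ℝ} {m : ℕ} (hL : ∀ t ∈ Icc 1 m, L t ≤ 1) :
    ∑ t ∈ Icc 1 m, L t ≤ m := by
  simpa using sum_le_card_nsmul (Icc 1 m) L 1 hL

theorem Real.log_div_sub_sum_le_sum_div_sub {N : ℝ} {L : ℕ → ℝ} (m : ℕ) (hm : (m : ℝ) < N)
    (hL : ∀ t ∈ Icc 1 m, L t ∈ Set.Icc (0 : ℝ) 1) :
    Real.log (N / (N - ∑ t ∈ Icc 1 m, L t)) ≤ ∑ t ∈ Icc 1 m, L t / (N - t) := by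
  induction m with
  | zero => simp
  | succ m ih =>
    have hL' : ∀ t ∈ Icc 1 m, L t ∈ Set.Icc (0 : ℝ) 1 := fun t ht =>
      hL t (Icc_subset_Icc_right m.le_succ ht)
    obtain ⟨hx0, hx1⟩ := hL (m + 1) (by simp)
    set S := ∑ t ∈ Icc 1 m, L t
    set x := L (m + 1)
    push_cast at hm
    have hS : S ≤ m := sum_Icc_one_le_of_le_one fun t ht => (hL' t ht).2
    have hgap : N - (m + 1) ≤ N - S - x := by linarith
    have hN : 0 < N := by linarith [m.cast_nonneg (α := ℝ)]
    have hNS : 0 < N - S := by linarith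
    have hNSx : 0 < N - S - x := by linarith
    have hlog_split : Real.log (N / (N - (S + x))) =
        Real.log (N / (N - S)) + Real.log ((N - S) / (N - S - x)) := by
      rw [← Real.log_mul (div_pos hN hNS).ne' (div_pos hNS hNSx).ne',
        div_mul_div_cancel₀ hNS.ne', sub_add_eq_sub_sub]
    have hstep : Real.log ((N - S) / (N - S - x)) ≤ x / (N - (m + 1 : ℕ)) := by
      push_cast
      calc Real.log ((N - S) / (N - S - x)) ≤ x / (N - S - x) :=
            Real.log_div_sub_le_div_sub hx0 (by linarith)
        _ ≤ x / (N - (m + 1)) := div_le_div_of_nonneg_left hx0 (by linarith) hgap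
    rw [sum_Icc_succ_top (by omega), sum_Icc_succ_top (by omega), hlog_split]
    exact add_le_add (ih (by linarith) hL') hstep

theorem stmt_2 (n : ℕ) (hn : 2 ≤ n) (L : ℕ → ℝ)
    (hL : ∀ t ∈ Finset.Icc 1 (n - 1), L t ∈ Set.Icc (0 : ℝ) 1) :
    ∑ t ∈ Finset.Icc 1 (n - 1), L t / ((n : ℝ) - t) ≥
      Real.log ((n : ℝ) / ((n : ℝ) - ∑ t ∈ Finset.Icc 1 (n - 1), L t)) :=
  Real.log_div_sub_sum_le_sum_div_sub (n - 1) (by exact_mod_cast Nat.sub_lt (by omega) one_pos) hL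
end
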